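/- arXiv:1101.3850 — 3 statements merged into one kernel-verified Lean document; each statement's English description precedes it below -/
import Mathlib

section
/- Let σ ≥ 0, d ∈ ℕ, and let f : ℂ → ℂ be entire. Assume f has exponential type at most σ, i.e. there is A > 0 with |f(z)| ≤ A·e^{σ|z|} for all z ∈ ℂ, and that f is polynomially bounded on the real axis: there is C > 0 with |f(x)| ≤ C·(1 + |x|^d) for all x ∈ ℝ. Then there exists a constant C₁ > 0 such that |f(z)| ≤ C₁·(1 + |z|^d)·e^{σ·|Im z|} for all z ∈ ℂ. -/
/-!
On the closed upper half-plane consider `g z = e^{iσz} f z / (z + i)^d`. The factor `e^{iσz}` has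
modulus `e^{-σ Im z}`, so `g` is bounded by `A` on the positive imaginary axis and grows at most
exponentially, while on the real axis `|g x| ≤ 2C`. The Phragmén–Lindelöf principle (Mathlib's
right half-plane version, rotated by `i`) gives `|g| ≤ 2C` on the whole upper half-plane, which
unwinds to the claimed bound there; the lower half-plane follows by applying this to `f (-z)`.
-/
open Complex Filter Asymptotics Topology

namespace PhragmenLindelof

variable {E : Type*} [NormedAddCommGroup E] [NormedSpace ℂ E]

theorem upper_half_plane_of_bounded_on_imag {g : ℂ → E} {M : ℝ}
    (hd : DiffContOnCl ℂ g {z | 0 < z.im})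
    (hexp : ∃ c < (2 : ℝ), ∃ B,
      g =O[Bornology.cobounded ℂ ⊓ 𝓟 {z | 0 < z.im}] fun z => Real.exp (B * ‖z‖ ^ c))
    (him : IsBoundedUnder (· ≤ ·) atTop fun t : ℝ => ‖g (t * I)‖) (hre : ∀ x : ℝ, ‖g x‖ ≤ M)
    {z : ℂ} (hz : 0 ≤ z.im) : ‖g z‖ ≤ M := by
  have hrot : Tendsto (I * ·) (Bornology.cobounded ℂ ⊓ 𝓟 {w | 0 < w.re})
      (Bornology.cobounded ℂ ⊓ 𝓟 {z | 0 < z.im}) := by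
    refine tendsto_inf.2 ⟨?_, tendsto_principal.2 ?_⟩
    · exact (tendsto_mul_left_cobounded I_ne_zero).mono_left inf_le_left
    · exact eventually_inf_principal.2 (.of_forall fun w hw => by simpa using hw)
  have key := right_half_plane_of_bounded_on_real (f := fun w => g (I * w)) (C := M)
    (hd.comp (differentiable_id.const_mul I).diffContOnCl fun w hw => by simpa using hw) ?_
    (by simpa only [mul_comm I] using him)
    (fun x => by simpa [mul_comm I, mul_assoc] using hre (-x))
    (z := -I * z) (by simpa using hz)
  · simpa [← mul_assoc] using key
  · obtain ⟨c, hc, B, hO⟩ := hexp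
    exact ⟨c, hc, B, by simpa [Function.comp_def] using hO.comp_tendsto hrot⟩

end PhragmenLindelof

lemma one_le_norm_add_I {z : ℂ} (hz : 0 ≤ z.im) : 1 ≤ ‖z + I‖ :=
  calc 1 ≤ (z + I).im := by simpa using hz
    _ ≤ ‖z + I‖ := (le_abs_self _).trans (abs_im_le_norm _)

lemma one_add_abs_pow_le_two_mul_norm_add_I_pow (x : ℝ) (d : ℕ) :
    1 + |x| ^ d ≤ 2 * ‖(x : ℂ) + I‖ ^ d := by
  have h1 : 1 ≤ ‖(x : ℂ) + I‖ ^ d := one_le_pow₀ (one_le_norm_add_I (by simp))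
  have h2 : |x| ^ d ≤ ‖(x : ℂ) + I‖ ^ d :=
    pow_le_pow_left₀ (abs_nonneg x) (by simpa using abs_re_le_norm ((x : ℂ) + I)) d
  linarith

lemma norm_add_I_pow_le (z : ℂ) (d : ℕ) : ‖z + I‖ ^ d ≤ 2 ^ (d - 1) * (1 + ‖z‖ ^ d) :=
  calc ‖z + I‖ ^ d ≤ (1 + ‖z‖) ^ d :=
        pow_le_pow_left₀ (norm_nonneg _) (by simpa [add_comm] using norm_add_le z I) d
    _ ≤ 2 ^ (d - 1) * (1 + ‖z‖ ^ d) := by simpa using add_pow_le zero_le_one (norm_nonneg z) d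

noncomputable def dampedQuotient (σ : ℝ) (d : ℕ) (f : ℂ → ℂ) (z : ℂ) : ℂ :=
  cexp (σ * I * z) * f z / (z + I) ^ d

section dampedQuotient

variable {σ : ℝ} {d : ℕ} {f : ℂ → ℂ}

lemma norm_dampedQuotient (z : ℂ) :
    ‖dampedQuotient σ d f z‖ = Real.exp (-σ * z.im) * ‖f z‖ / ‖z + I‖ ^ d := by
  simp [dampedQuotient, norm_exp]

lemma norm_dampedQuotient_le {z : ℂ} (hz : 0 ≤ z.im) :
    ‖dampedQuotient σ d f z‖ ≤ Real.exp (-σ * z.im) * ‖f z‖ := by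
  rw [norm_dampedQuotient]
  exact div_le_self (by positivity) (one_le_pow₀ (one_le_norm_add_I hz))

lemma diffContOnCl_dampedQuotient (hf : Differentiable ℂ f) :
    DiffContOnCl ℂ (dampedQuotient σ d f) {z | 0 < z.im} := by
  refine DifferentiableOn.diffContOnCl fun z hz => DifferentiableAt.differentiableWithinAt ?_
  have hz : z + I ≠ 0 :=
    norm_pos_iff.1 <| one_pos.trans_le <| one_le_norm_add_I <| by simpa using hz
  unfold dampedQuotient
  fun_prop (disch := exact pow_ne_zero _ hz)

lemma norm_dampedQuotient_ofReal_le {C : ℝ} (hreal : ∀ x : ℝ, ‖f x‖ ≤ C * (1 + |x| ^ d))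
    (x : ℝ) : ‖dampedQuotient σ d f x‖ ≤ 2 * C := by
  have hC : 0 ≤ C := nonneg_of_mul_nonneg_left ((norm_nonneg _).trans (hreal 0)) (by positivity)
  have hpos : 0 < ‖(x : ℂ) + I‖ ^ d := pow_pos (one_pos.trans_le (one_le_norm_add_I (by simp))) d
  rw [norm_dampedQuotient, div_le_iff₀ hpos]
  calc Real.exp (-σ * (x : ℂ).im) * ‖f x‖ = ‖f x‖ := by simp
    _ ≤ C * (1 + |x| ^ d) := hreal x
    _ ≤ 2 * C * ‖(x : ℂ) + I‖ ^ d := by nlinarith [one_add_abs_pow_le_two_mul_norm_add_I_pow x d]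

variable {A : ℝ} (htype : ∀ z, ‖f z‖ ≤ A * Real.exp (σ * ‖z‖))
include htype

lemma isBigO_dampedQuotient :
    ∃ c < (2 : ℝ), ∃ B, dampedQuotient σ d f =O[Bornology.cobounded ℂ ⊓ 𝓟 {z | 0 < z.im}]
      fun z => Real.exp (B * ‖z‖ ^ c) := by
  have hA : 0 ≤ A := by simpa using (norm_nonneg _).trans (htype 0)
  refine ⟨1, one_lt_two, 2 * |σ|, .of_bound A <|
    eventually_inf_principal.2 <| .of_forall fun z hz => ?_⟩
  have hexp_le : -σ * z.im + σ * ‖z‖ ≤ 2 * |σ| * ‖z‖ := by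
    have := abs_le.1 (abs_im_le_norm z)
    cases abs_cases σ <;> nlinarith
  calc ‖dampedQuotient σ d f z‖ ≤ Real.exp (-σ * z.im) * (A * Real.exp (σ * ‖z‖)) :=
        (norm_dampedQuotient_le hz.le).trans (by gcongr; exact htype z)
    _ = A * Real.exp (-σ * z.im + σ * ‖z‖) := by rw [Real.exp_add]; ring
    _ ≤ A * ‖Real.exp (2 * |σ| * ‖z‖ ^ (1 : ℝ))‖ := by
        rw [Real.rpow_one, Real.norm_of_nonneg (Real.exp_pos _).le]; gcongr

lemma isBoundedUnder_norm_dampedQuotient_mul_I :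
    IsBoundedUnder (· ≤ ·) atTop fun t : ℝ => ‖dampedQuotient σ d f (t * I)‖ := by
  refine isBoundedUnder_of_eventually_le (a := A) ((eventually_ge_atTop 0).mono fun t ht => ?_)
  calc ‖dampedQuotient σ d f (t * I)‖ ≤ Real.exp (-σ * t) * (A * Real.exp (σ * t)) := by
        refine (norm_dampedQuotient_le (by simpa using ht)).trans ?_
        simpa [abs_of_nonneg ht] using
          mul_le_mul_of_nonneg_left (htype (t * I)) (Real.exp_pos _).le
    _ = A := by rw [mul_left_comm, ← Real.exp_add]; simp

end dampedQuotient

theorem norm_le_norm_add_I_pow_mul_exp_im {σ : ℝ} {d : ℕ} {f : ℂ → ℂ} {A C : ℝ}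
    (hf : Differentiable ℂ f) (htype : ∀ z, ‖f z‖ ≤ A * Real.exp (σ * ‖z‖))
    (hreal : ∀ x : ℝ, ‖f x‖ ≤ C * (1 + |x| ^ d)) {z : ℂ} (hz : 0 ≤ z.im) :
    ‖f z‖ ≤ 2 * C * ‖z + I‖ ^ d * Real.exp (σ * z.im) := by
  have hbound := PhragmenLindelof.upper_half_plane_of_bounded_on_imag
    (diffContOnCl_dampedQuotient hf) (isBigO_dampedQuotient htype)
    (isBoundedUnder_norm_dampedQuotient_mul_I htype)
    (norm_dampedQuotient_ofReal_le hreal) hz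
  have hpos : 0 < ‖z + I‖ ^ d := pow_pos (one_pos.trans_le (one_le_norm_add_I hz)) d
  rw [norm_dampedQuotient, div_le_iff₀ hpos] at hbound
  calc ‖f z‖ = Real.exp (σ * z.im) * (Real.exp (-σ * z.im) * ‖f z‖) := by
        rw [← mul_assoc, ← Real.exp_add]; simp
    _ ≤ Real.exp (σ * z.im) * (2 * C * ‖z + I‖ ^ d) := by gcongr
    _ = 2 * C * ‖z + I‖ ^ d * Real.exp (σ * z.im) := by ring

theorem norm_le_one_add_norm_pow_mul_exp_abs_im {σ : ℝ} {d : ℕ} {f : ℂ → ℂ} {A C : ℝ}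
    (hf : Differentiable ℂ f) (htype : ∀ z, ‖f z‖ ≤ A * Real.exp (σ * ‖z‖))
    (hreal : ∀ x : ℝ, ‖f x‖ ≤ C * (1 + |x| ^ d)) {z : ℂ} (hz : 0 ≤ z.im) :
    ‖f z‖ ≤ 2 * C * 2 ^ (d - 1) * (1 + ‖z‖ ^ d) * Real.exp (σ * |z.im|) := by
  have hC : 0 ≤ C := nonneg_of_mul_nonneg_left ((norm_nonneg _).trans (hreal 0)) (by positivity)
  calc ‖f z‖ ≤ 2 * C * ‖z + I‖ ^ d * Real.exp (σ * z.im) :=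
        norm_le_norm_add_I_pow_mul_exp_im hf htype hreal hz
    _ ≤ 2 * C * (2 ^ (d - 1) * (1 + ‖z‖ ^ d)) * Real.exp (σ * |z.im|) := by
        rw [abs_of_nonneg hz]; gcongr; exact norm_add_I_pow_le z d
    _ = 2 * C * 2 ^ (d - 1) * (1 + ‖z‖ ^ d) * Real.exp (σ * |z.im|) := by ring

theorem stmt_0_general (σ : ℝ) (d : ℕ) (f : ℂ → ℂ)
    (hf : Differentiable ℂ f)
    (htype : ∃ A > 0, ∀ z : ℂ, ‖f z‖ ≤ A * Real.exp (σ * ‖z‖))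
    (hreal : ∃ C > 0, ∀ x : ℝ, ‖f x‖ ≤ C * (1 + |x| ^ d)) :
    ∃ C₁ > 0, ∀ z : ℂ, ‖f z‖ ≤ C₁ * (1 + ‖z‖ ^ d) * Real.exp (σ * |z.im|) := by
  obtain ⟨A, -, htype⟩ := htype
  obtain ⟨C, hC, hreal⟩ := hreal
  refine ⟨2 * C * 2 ^ (d - 1), by positivity, fun z => ?_⟩
  rcases le_total 0 z.im with hz | hz
  · exact norm_le_one_add_norm_pow_mul_exp_abs_im hf htype hreal hz
  · have h := norm_le_one_add_norm_pow_mul_exp_abs_im (f := fun w => f (-w))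
      (hf.comp differentiable_neg) (fun w => by simpa using htype (-w))
      (fun x => by simpa using hreal (-x))
      (z := -z) (by simpa using hz)
    simpa using h

/-- Phragmén–Lindelöf (Levin, p.39), first part: an entire function of
exponential type at most `σ` which is polynomially bounded (degree `d`) on the
real axis satisfies `‖f z‖ ≤ C₁ (1 + ‖z‖^d) e^{σ |Im z|}` on all of `ℂ`. -/
theorem stmt_0 (σ : ℝ) (hσ : 0 ≤ σ) (d : ℕ) (f : ℂ → ℂ)
    (hf : Differentiable ℂ f)
    (htype : ∃ A > 0, ∀ z : ℂ, ‖f z‖ ≤ A * Real.exp (σ * ‖z‖))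
    (hreal : ∃ C > 0, ∀ x : ℝ, ‖f x‖ ≤ C * (1 + |x| ^ d)) :
    ∃ C₁ > 0, ∀ z : ℂ, ‖f z‖ ≤ C₁ * (1 + ‖z‖ ^ d) * Real.exp (σ * |z.im|) :=
  stmt_0_general σ d f hf htype hreal
end

section
/- Let d ∈ ℕ and let u : ℝ → ℂ be integrable with compact support. Suppose there exist coefficients a₀, …, a_d ∈ ℂ such that ∫_ℝ e^{ixt} u(t) dt = a₀ + a₁x + ⋯ + a_d x^d for every x ∈ ℝ. Then ∫_ℝ e^{ixt} t^{d+1} u(t) dt = 0 for every x ∈ ℝ, and hence t^{d+1}·u(t) = 0 for almost every t ∈ ℝ. -/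
open MeasureTheory Complex

open scoped FourierTransform Real

/-!
Differentiating under the integral sign `d + 1` times (the moments `∫ |t|^k |u t|` are finite
because `u` has compact support), the `(d + 1)`-st derivative of the Fourier transform of `u` is
`(-2πi)^(d+1)` times the Fourier transform of `t^(d+1) u(t)`. That derivative vanishes because the
transform is a polynomial of degree at most `d`.

An integrable `f` with `𝓕 f = 0` vanishes a.e.: a test function `φ` is a Schwartz function, so
`φ = 𝓕 (𝓕⁻ φ)`, and moving `𝓕` across the pairing gives `∫ f φ = ∫ (𝓕 f) (𝓕⁻ φ) = 0`.
-/

theorem HasCompactSupport.integrable_continuous_smul {X E 𝕜 : Type*} [TopologicalSpace X]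
    [T2Space X] [MeasurableSpace X] [OpensMeasurableSpace X] [NormedAddCommGroup E]
    [NormedRing 𝕜] [Module 𝕜 E] [IsBoundedSMul 𝕜 E] [SecondCountableTopologyEither X 𝕜]
    {μ : Measure X} {f : X → E} (hf : HasCompactSupport f) (hf' : LocallyIntegrable f μ)
    {g : X → 𝕜} (hg : Continuous g) : Integrable (fun x ↦ g x • f x) μ :=
  (integrableOn_iff_integrable_of_support_subset
      ((Function.support_smul_subset_right g f).trans (subset_tsupport f))).mp
    ((hf'.integrableOn_isCompact hf).continuousOn_smul hg.continuousOn hf)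

theorem Real.integral_exp_mul_smul_eq_fourier {E : Type*} [NormedAddCommGroup E]
    [NormedSpace ℂ E] (f : ℝ → E) (x : ℝ) :
    ∫ t : ℝ, Complex.exp (I * x * t) • f t = 𝓕 f (-(x / (2 * π))) := by
  rw [Real.fourier_real_eq_integral_exp_smul]
  congr 1 with t
  congr 2
  push_cast
  field_simp

theorem Real.fourier_const_smul {V E : Type*} [NormedAddCommGroup V] [InnerProductSpace ℝ V]
    [FiniteDimensional ℝ V] [MeasurableSpace V] [BorelSpace V] [NormedAddCommGroup E]
    [NormedSpace ℂ E] (c : ℂ) (f : V → E) : 𝓕 (c • f) = c • 𝓕 f :=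
  VectorFourier.fourierIntegral_const_smul _ _ _ _ _

theorem Real.fourier_pow_smul_eq_zero_of_iteratedDeriv_fourier_eq_zero {E : Type*}
    [NormedAddCommGroup E] [NormedSpace ℂ E]
    {f : ℝ → E} {n : ℕ} (hf : ∀ k ≤ n, Integrable (fun t : ℝ ↦ t ^ k • f t))
    (h : iteratedDeriv n (𝓕 f) = 0) : 𝓕 (fun t : ℝ ↦ (t : ℂ) ^ n • f t) = 0 := by
  have hc : (-2 * π * I) ^ n ≠ 0 := pow_ne_zero _ (by simp [Real.pi_ne_zero, I_ne_zero])
  rw [Real.iteratedDeriv_fourier (N := n) (fun k hk ↦ hf k (by exact_mod_cast hk)) le_rfl] at h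
  have hsmul : (fun t : ℝ ↦ (-2 * π * I * t) ^ n • f t) =
      (-2 * π * I) ^ n • fun t : ℝ ↦ (t : ℂ) ^ n • f t := by
    ext t
    simp only [Pi.smul_apply, smul_smul, ← mul_pow]
  rw [hsmul, Real.fourier_const_smul] at h
  exact (smul_eq_zero.mp h).resolve_left hc

theorem Polynomial.iteratedDeriv_eval_ofReal (P : Polynomial ℂ) (n : ℕ) :
    iteratedDeriv n (fun x : ℝ ↦ P.eval (x : ℂ)) =
      fun x : ℝ ↦ (Polynomial.derivative^[n] P).eval (x : ℂ) := by
  induction n with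
  | zero => simp
  | succ n ih =>
    ext x
    rw [iteratedDeriv_succ, ih, Function.iterate_succ_apply']
    exact ((Polynomial.derivative^[n] P).hasDerivAt (x : ℂ)).comp_ofReal.deriv

theorem iteratedDeriv_sum_fin_mul_pow_eq_zero {n : ℕ} (b : Fin n → ℂ) :
    iteratedDeriv n (fun x : ℝ ↦ ∑ i : Fin n, b i * (x : ℂ) ^ (i : ℕ)) = 0 := by
  have hP : (fun x : ℝ ↦ ∑ i : Fin n, b i * (x : ℂ) ^ (i : ℕ)) =
      fun x ↦ (∑ i : Fin n, Polynomial.C (b i) * Polynomial.X ^ (i : ℕ)).eval (x : ℂ) := by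
    simp [Polynomial.eval_finsetSum]
  rw [hP, Polynomial.iteratedDeriv_eval_ofReal,
    Polynomial.iterate_derivative_eq_zero_of_degree_lt (Polynomial.degree_sum_fin_lt b)]
  exact funext fun _ ↦ Polynomial.eval_zero

theorem MeasureTheory.Integrable.ae_eq_zero_of_fourier_eq_zero {V : Type*}
    [NormedAddCommGroup V] [InnerProductSpace ℝ V] [FiniteDimensional ℝ V]
    [MeasurableSpace V] [BorelSpace V] {f : V → ℂ} (hf : Integrable f) (h : 𝓕 f = 0) :
    f =ᵐ[volume] 0 := by
  refine ae_eq_zero_of_integral_contDiff_smul_eq_zero hf.locallyIntegrable fun g hg hgs ↦ ?_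
  let φ : SchwartzMap V ℂ :=
    (hgs.comp_left Complex.ofReal_zero).toSchwartzMap (ofRealCLM.contDiff.comp hg)
  have hself : ∫ ξ, 𝓕 f ξ * 𝓕⁻ φ ξ = ∫ x, f x * φ x := by
    have hφ : 𝓕 (𝓕⁻ φ) = φ := FourierTransform.fourier_fourierInv_eq φ
    conv_rhs => rw [← hφ, SchwartzMap.fourier_coe]
    simpa using! VectorFourier.integral_bilin_fourierIntegral_eq_flip (.mul ℂ ℂ)
      (L := innerₗ V) Real.continuous_fourierChar continuous_inner hf
      ((𝓕⁻ φ).integrable (μ := volume))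
  simp_rw [h, Pi.zero_apply, zero_mul, integral_zero] at hself
  simp_rw [Complex.real_smul, mul_comm _ (f _)]
  exact hself.symm

/-- Equations (3.5)–(3.6): if the Fourier transform of a compactly supported
integrable `u` is a polynomial of degree at most `d` on `ℝ`, then the Fourier
transform of `t^{d+1} u(t)` vanishes identically, hence `t^{d+1} u(t) = 0`
almost everywhere. -/
theorem stmt_8 (d : ℕ) (u : ℝ → ℂ)
    (hu : Integrable u)
    (hsupp : HasCompactSupport u)
    (a : Fin (d + 1) → ℂ)
    (hpoly : ∀ x : ℝ,
      (∫ t : ℝ, Complex.exp (Complex.I * x * t) * u t) =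
        ∑ i : Fin (d + 1), a i * (x : ℂ) ^ (i : ℕ)) :
    (∀ x : ℝ, (∫ t : ℝ, Complex.exp (Complex.I * x * t) * ((t : ℂ) ^ (d + 1) * u t)) = 0) ∧
      ∀ᵐ t : ℝ, (t : ℂ) ^ (d + 1) * u t = 0 := by
  have hmoment (k : ℕ) : Integrable (fun t : ℝ ↦ t ^ k • u t) :=
    hsupp.integrable_continuous_smul hu.locallyIntegrable (continuous_pow k)
  have hFu : 𝓕 u =
      fun w : ℝ ↦ ∑ i : Fin (d + 1), a i * (-(2 * π)) ^ (i : ℕ) * (w : ℂ) ^ (i : ℕ) := by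
    ext w
    have h := Real.integral_exp_mul_smul_eq_fourier u (-(2 * π * w))
    rw [neg_div, neg_neg, mul_div_cancel_left₀ _ (by positivity)] at h
    rw [← h]
    exact (hpoly _).trans (Finset.sum_congr rfl fun i _ ↦ by push_cast; ring)
  have hFv : 𝓕 (fun t : ℝ ↦ (t : ℂ) ^ (d + 1) • u t) = 0 :=
    Real.fourier_pow_smul_eq_zero_of_iteratedDeriv_fourier_eq_zero (fun k _ ↦ hmoment k)
      (hFu ▸ iteratedDeriv_sum_fin_mul_pow_eq_zero _)
  have hv : Integrable (fun t : ℝ ↦ (t : ℂ) ^ (d + 1) • u t) := by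
    simpa using hmoment (d + 1)
  refine ⟨fun x ↦ ?_, hv.ae_eq_zero_of_fourier_eq_zero hFv⟩
  exact (Real.integral_exp_mul_smul_eq_fourier _ x).trans (congrFun hFv _)
end

section
/- Let u : ℝ → ℂ be continuous with compact support. Suppose there exist d ∈ ℕ and coefficients a₀, …, a_d ∈ ℂ such that ∫_ℝ e^{ixt} u(t) dt = a₀ + a₁x + ⋯ + a_d x^d for every x ∈ ℝ. Then u(t) = 0 for every t ∈ ℝ. -/
/-!
By the Riemann–Lebesgue lemma the Fourier transform of the integrable function `u` tends to `0`
at infinity. A polynomial with that property is zero, so the Fourier transform of `u` vanishes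
identically, and Fourier inversion (valid since `u` is continuous) gives `u = 0`.
-/

open MeasureTheory Complex Filter Polynomial Topology FourierTransform

theorem Polynomial.eq_zero_of_tendsto_eval_zero {R α : Type*} [NormedRing R]
    [IsAbsoluteValue (norm : R → ℝ)] (p : R[X]) {l : Filter α} [l.NeBot] {z : α → R}
    (hz : Tendsto (fun x => ‖z x‖) l atTop) (hp : Tendsto (fun x => p.eval (z x)) l (𝓝 0)) :
    p = 0 := by
  have hdeg : p.degree ≤ 0 := not_lt.1 fun h =>
    not_tendsto_nhds_of_tendsto_atTop (p.tendsto_norm_atTop h hz) 0 (by simpa using hp.norm)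
  rw [eq_C_of_degree_le_zero hdeg] at hp ⊢
  simpa using hp

theorem Continuous.eq_zero_of_fourier_eq_zero {V E : Type*} [NormedAddCommGroup V]
    [InnerProductSpace ℝ V] [MeasurableSpace V] [BorelSpace V] [FiniteDimensional ℝ V]
    [NormedAddCommGroup E] [NormedSpace ℂ E] [CompleteSpace E] {f : V → E}
    (hf : Continuous f) (hf_int : Integrable f) (h : 𝓕 f = 0) : f = 0 := by
  ext v
  rw [← hf.fourierInv_fourier_eq hf_int (h ▸ integrable_zero _ _ _), h]
  simp [Real.fourierInv_eq]

theorem Real.integral_exp_I_mul_mul_eq_fourier (u : ℝ → ℂ) (x : ℝ) :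
    ∫ t : ℝ, cexp (I * x * t) * u t = 𝓕 u (-x / (2 * Real.pi)) := by
  rw [Real.fourier_real_eq_integral_exp_smul]
  congr 1 with t
  rw [smul_eq_mul]
  congr 2
  push_cast
  field_simp

theorem Real.tendsto_integral_exp_I_mul_mul_atTop (u : ℝ → ℂ) :
    Tendsto (fun x : ℝ => ∫ t : ℝ, cexp (I * x * t) * u t) atTop (𝓝 0) := by
  simp only [Real.integral_exp_I_mul_mul_eq_fourier]
  refine (Real.zero_at_infty_fourier u).comp ?_
  exact (tendsto_neg_atTop_atBot.atBot_div_const (by positivity)).mono_right atBot_le_cocompact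

/-- Section 3 of the paper, combined: a continuous compactly supported function
whose Fourier transform is a polynomial on `ℝ` vanishes identically. -/
theorem stmt_9 (u : ℝ → ℂ)
    (hu : Continuous u)
    (hsupp : HasCompactSupport u)
    (hpoly : ∃ (d : ℕ) (a : Fin (d + 1) → ℂ), ∀ x : ℝ,
      (∫ t : ℝ, Complex.exp (Complex.I * x * t) * u t) =
        ∑ i : Fin (d + 1), a i * (x : ℂ) ^ (i : ℕ)) :
    ∀ t : ℝ, u t = 0 := by
  obtain ⟨d, a, ha⟩ := hpoly
  set p : ℂ[X] := ∑ i : Fin (d + 1), C (a i) * X ^ (i : ℕ)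
  have hp_eval (x : ℝ) : p.eval (x : ℂ) = ∫ t : ℝ, cexp (I * x * t) * u t := by
    simp [p, eval_finsetSum, ha]
  have hp : p = 0 := p.eq_zero_of_tendsto_eval_zero (z := ((↑) : ℝ → ℂ))
    (by simpa using tendsto_abs_atTop_atTop)
    (by simpa only [hp_eval] using Real.tendsto_integral_exp_I_mul_mul_atTop u)
  have hF : 𝓕 u = 0 := by
    ext ξ
    have := hp_eval (-(2 * Real.pi * ξ))
    rw [hp, eval_zero, Real.integral_exp_I_mul_mul_eq_fourier] at this
    rwa [neg_neg, mul_div_cancel_left₀ _ (by positivity), eq_comm] at this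
  intro t
  rw [hu.eq_zero_of_fourier_eq_zero (hu.integrable_of_hasCompactSupport hsupp) hF, Pi.zero_apply]
end
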